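/- arXiv:1211.1647 — 2 statements merged into one kernel-verified Lean document; each statement's English description precedes it below -/
import Mathlib

section
/- Let H be a simply connected graded commutative algebra over ℚ of finite type with H^i = 0 for i < n (n ≥ 2) and H^i = 0 for i ≥ 3n−1. Then any weight-decreasing degree 1 derivation perturbation of the bigraded model of H is zero; equivalently, the degree 1 part of the dg Lie algebra L of weight-decreasing derivations of the free Lie coalgebra model L^c(H) vanishes, so H is intrinsically formal (the moduli space of rational homotopy types with cohomology H is a single point). -/
/-- let `H` be a simply connected graded commutative algebra of finite
type over `ℚ` with `Hⁱ = 0` for `i < n` (with `n ≥ 2`) and `Hⁱ = 0` for `i ≥ 3n - 1`.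
Then every weight-decreasing degree-1 perturbation vanishes: any linear candidate
`θ_k : H̄^{⊗(k+2)} → H` (with `k ≥ 1`) lowering the internal degree by `k` — i.e. any
multilinear map sending homogeneous elements of degrees `d₁, …, d_{k+2}` into degree
`Σ dᵢ - k` — is identically zero.  Hence the degree-1 part of the dg Lie algebra of
weight-decreasing derivations of `L^c(H)` vanishes, `H` is intrinsically formal, and
the moduli space of rational homotopy types with cohomology `H` is a single point. -/
theorem shallow_implies_intrinsically_formal
    {K : Type*} [Field K] [CharZero K]
    {H : Type*} [AddCommGroup H] [Module K H]
    (grade : ℤ → Submodule K H)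
    (hspan : ∀ x : H, x ∈ Submodule.span K (⋃ i : ℤ, (grade i : Set H)))
    (n : ℤ) (hn : 2 ≤ n)
    (hlow : ∀ i : ℤ, i < n → grade i = ⊥)
    (hhigh : ∀ i : ℤ, 3 * n - 1 ≤ i → grade i = ⊥)
    (k : ℕ) (hk : 1 ≤ k)
    (θ : MultilinearMap K (fun _ : Fin (k + 2) => H) H)
    (hθ : ∀ (dg : Fin (k + 2) → ℤ) (x : Fin (k + 2) → H),
      (∀ i, x i ∈ grade (dg i)) → θ x ∈ grade ((∑ i, dg i) - k)) :
    ∀ x : Fin (k + 2) → H, θ x = 0 := by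
  set S : Set H := ⋃ i : ℤ, (grade i : Set H) with hS
  -- homogeneous case
  have hom : ∀ x : Fin (k + 2) → H, (∀ i, x i ∈ S) → θ x = 0 := by
    intro x hx
    choose dg hdg using fun i => Set.mem_iUnion.mp (hx i)
    by_cases hlt : ∃ i, dg i < n
    · obtain ⟨i, hi⟩ := hlt
      have hz : x i = 0 := by
        have := hdg i
        rw [hlow _ hi] at this
        simpa using this
      exact θ.map_coord_zero i hz
    · push_neg at hlt
      have hsum : ((k : ℤ) + 2) * n ≤ ∑ i, dg i := by
        have h1 : ∑ _i : Fin (k + 2), n ≤ ∑ i, dg i :=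
          Finset.sum_le_sum (fun i _ => hlt i)
        rw [Finset.sum_const, Finset.card_univ, Fintype.card_fin] at h1
        have : ((k : ℤ) + 2) * n = (k + 2 : ℕ) • n := by
          simp [nsmul_eq_mul]
        rw [this]; exact h1
      have hbig : 3 * n - 1 ≤ (∑ i, dg i) - (k : ℤ) := by
        have hk' : (1 : ℤ) ≤ (k : ℤ) := by exact_mod_cast hk
        nlinarith [hsum]
      have hmem : θ x ∈ grade ((∑ i, dg i) - (k : ℤ)) := hθ dg x (fun i => hdg i)
      rw [hhigh _ hbig] at hmem
      simpa using hmem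
  -- extend by multilinearity, slot by slot
  have key : ∀ m : ℕ, ∀ x : Fin (k + 2) → H,
      (∀ i : Fin (k + 2), (i : ℕ) < m → x i ∈ Submodule.span K S) →
      (∀ i : Fin (k + 2), m ≤ (i : ℕ) → x i ∈ S) → θ x = 0 := by
    intro m
    induction m with
    | zero => intro x _ h2; exact hom x (fun i => h2 i (Nat.zero_le _))
    | succ m ih =>
      intro x h1 h2
      by_cases hm : m < k + 2
      · set j : Fin (k + 2) := ⟨m, hm⟩ with hj
        have hxj : x j ∈ Submodule.span K S := h1 j (by simp [hj])
        have hup : ∀ y : H, y ∈ Submodule.span K S → θ (Function.update x j y) = 0 := by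
          intro y hy
          induction hy using Submodule.span_induction with
          | mem y hyS =>
            apply ih
            · intro i hi
              have hij : i ≠ j := by
                intro h; rw [h] at hi; simp [hj] at hi
              rw [Function.update_of_ne hij]
              exact h1 i (by omega)
            · intro i hi
              rcases eq_or_ne i j with h | h
              · rw [h, Function.update_self]; exact hyS
              · rw [Function.update_of_ne h]
                apply h2 i
                have : (i : ℕ) ≠ m := by
                  intro hc; exact h (Fin.ext (by simp [hj, hc]))
                omega
          | zero => exact θ.map_coord_zero j (by simp)
          | add a b _ _ ha hb => rw [θ.map_update_add]; rw [ha, hb, add_zero]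
          | smul c a _ ha => rw [θ.map_update_smul, ha, smul_zero]
        have := hup (x j) hxj
        simpa using this
      · apply ih
        · intro i hi; exact h1 i (by omega)
        · intro i hi; omega
  intro x
  exact key (k + 2) x (fun i _ => hspan (x i)) (fun i hi => absurd i.isLt (by omega))
end

section
/- Let H be a graded commutative algebra, (SZ, d) its bigraded (Tate–Jozefiak) model, and suppose θ : H^{⊗(k+2)} → H is the lowest-weight term of a perturbation, with all j-fold Massey products vanishing identically for 3 ≤ j < k+2. If θ = [d, φ] for some weight-decreasing derivation φ (identified with a map H^{⊗(k+1)} → H), then for every (x_0 ⊗ ... ⊗ x_{k+1}) in the kernel M_{k+2} of Σ_j (−1)^j (1⊗...⊗m⊗...⊗1) (with m the multiplication of H), the value θ(x_0 ⊗ ... ⊗ x_{k+1}) lies in x_0·H + H·x_{k+1}. That is, exact perturbations give vanishing (k+2)-fold Massey product cosets. -/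
open scoped TensorProduct PiTensorProduct

variable {K : Type*} [Field K] [CharZero K]
variable {H : Type*} [CommRing H] [Algebra K H]

/-- The family obtained from `x : Fin (k+2) → H` by multiplying the `j`-th and
`(j+1)`-st entries: `(x₀, …, x_j·x_{j+1}, …, x_{k+1})`. -/
def mergeAt {k : ℕ} (j : Fin (k + 1)) (x : Fin (k + 2) → H) : Fin (k + 1) → H :=
  fun i =>
    if (i : ℕ) = (j : ℕ) then x i.castSucc * x i.succ
    else if (i : ℕ) < (j : ℕ) then x i.castSucc else x i.succ

/-- let `(SZ, d)` be the bigraded model of a graded commutative algebra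
`H`, and let `θ : H^{⊗(k+2)} → H` be the lowest weight term of a perturbation which is
exact, `θ = [d, φ]` for a weight-decreasing derivation `φ` identified with a map
`H^{⊗(k+1)} → H`; explicitly,
`θ(x₀⊗⋯⊗x_{k+1}) = x₀·φ(x₁,…,x_{k+1}) + Σ_j (-1)^{j+1} φ(…, x_j x_{j+1}, …)
  + (-1)^k φ(x₀,…,x_k)·x_{k+1}`.
Then for every `x₀ ⊗ ⋯ ⊗ x_{k+1}` in the kernel `M_{k+2}` of
`Σ_j (-1)^j (1⊗⋯⊗m⊗⋯⊗1)`, the value `θ(x₀⊗⋯⊗x_{k+1})` lies in `x₀·H + H·x_{k+1}`: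
exact perturbations give vanishing `(k+2)`-fold Massey product cosets. -/
theorem exact_perturbation_gives_vanishing_massey_coset
    (k : ℕ) (hk : 1 ≤ k)
    (θ : MultilinearMap K (fun _ : Fin (k + 2) => H) H)
    (φ : MultilinearMap K (fun _ : Fin (k + 1) => H) H)
    (hθ : ∀ x : Fin (k + 2) → H,
      θ x = x 0 * φ (x ∘ Fin.succ) +
        (∑ j : Fin (k + 1), (-1 : K) ^ ((j : ℕ) + 1) • φ (mergeAt j x)) +
        (-1 : K) ^ k • (φ (x ∘ Fin.castSucc) * x (Fin.last (k + 1)))) :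
    ∀ x : Fin (k + 2) → H,
      (∑ j : Fin (k + 1), (-1 : K) ^ (j : ℕ) •
          (PiTensorProduct.tprod K (mergeAt j x) : ⨂[K] (_ : Fin (k + 1)), H)) = 0 →
      ∃ a b : H, θ x = x 0 * a + b * x (Fin.last (k + 1)) := by
  intro x hx
  refine ⟨φ (x ∘ Fin.succ), (-1 : K) ^ k • φ (x ∘ Fin.castSucc), ?_⟩
  have h0 : (∑ j : Fin (k + 1), (-1 : K) ^ (j : ℕ) • φ (mergeAt j x)) = 0 := by
    have := congrArg (PiTensorProduct.lift φ) hx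
    simpa [map_sum] using this
  have h1 : (∑ j : Fin (k + 1), (-1 : K) ^ ((j : ℕ) + 1) • φ (mergeAt j x)) = 0 := by
    have he : ∀ j : Fin (k + 1),
        (-1 : K) ^ ((j : ℕ) + 1) • φ (mergeAt j x)
          = -((-1 : K) ^ (j : ℕ) • φ (mergeAt j x)) := by
      intro j
      rw [pow_succ, mul_comm, mul_smul]
      simp
    rw [Finset.sum_congr rfl fun j _ => he j, Finset.sum_neg_distrib, h0, neg_zero]
  rw [hθ x, h1, smul_mul_assoc]
  ring
end
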